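/- The conjugator length function of every split crystallographic group grows linearly. -/

import Mathlib

noncomputable section

/-- Euclidean `n`-space. -/
abbrev En (n : ℕ) : Type := EuclideanSpace ℝ (Fin n)

/-- The orthogonal group of Euclidean `n`-space, realized as linear isometries. -/
abbrev OrthGrp (n : ℕ) : Type := En n ≃ₗᵢ[ℝ] En n

/-- The action of the orthogonal group on the (multiplicatively written) translation group. -/
def rotAction (n : ℕ) : OrthGrp n →* MulAut (Multiplicative (En n)) where
  toFun A := AddEquiv.toMultiplicative A.toLinearEquiv.toAddEquiv
  map_one' := by ext x; rfl
  map_mul' A B := by ext x; rfl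

/-- The isometry group `Isom(𝔼ⁿ) = T ⋊ O(n)`. -/
abbrev IsomE (n : ℕ) : Type :=
  SemidirectProduct (Multiplicative (En n)) (OrthGrp n) (rotAction n)

instance (n : ℕ) : TopologicalSpace (OrthGrp n) :=
  TopologicalSpace.induced (fun A => (A : En n → En n)) inferInstance

instance (n : ℕ) : TopologicalSpace (IsomE n) :=
  TopologicalSpace.induced (fun g => (g.left, g.right)) inferInstance

/-- The translation subgroup `T` of `Isom(𝔼ⁿ)`. -/
def transSubgroup (n : ℕ) : Subgroup (IsomE n) := SemidirectProduct.inl.range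

/-- The orthogonal subgroup `O(n)` of `Isom(𝔼ⁿ)`. -/
def sphSubgroup (n : ℕ) : Subgroup (IsomE n) := SemidirectProduct.inr.range

/-- A subgroup `H` of `Isom(𝔼ⁿ)` *splits* if `H = T_H ⋊ H₀`:
the translation part and the spherical part of every element of `H` lie in `H`. -/
def Splits {n : ℕ} (H : Subgroup (IsomE n)) : Prop :=
  ∀ h ∈ H, SemidirectProduct.inl h.left ∈ H ∧ SemidirectProduct.inr h.right ∈ H

/-- The translation vector of an isometry. -/
def tPart {n : ℕ} (g : IsomE n) : En n := Multiplicative.toAdd g.left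

/-- The lattice `L_H = {λ : t^λ ∈ T_H}` of translation vectors of `H`. -/
def latticeLH {n : ℕ} (H : Subgroup (IsomE n)) : Set (En n) :=
  {v | SemidirectProduct.inl (Multiplicative.ofAdd v) ∈ H}

/-- Word length with respect to a generating set `S` (symmetrized). -/
def wordLength {G : Type*} [Group G] (S : Set G) (g : G) : ℕ :=
  sInf {k | ∃ l : List G, (∀ x ∈ l, x ∈ S ∨ x⁻¹ ∈ S) ∧ l.prod = g ∧ l.length = k}

/-- The conjugator length of a pair of elements. -/
def conjLength {G : Type*} [Group G] (S : Set G) (h h' : G) : ℕ :=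
  sInf {m | ∃ k : G, k * h * k⁻¹ = h' ∧ wordLength S k = m}

/-- The conjugator length function. -/
def CLF {G : Type*} [Group G] (S : Set G) (m : ℕ) : ℕ :=
  sSup {l | ∃ h h' : G, IsConj h h' ∧ wordLength S h + wordLength S h' ≤ m ∧
    conjLength S h h' = l}

/-- `g` quasi-dominates `f` via an increasing affine function. -/
def QuasiDom (f g : ℕ → ℕ) : Prop :=
  ∃ C D : ℕ, 0 < C ∧ ∀ m, f m ≤ C * g (C * m + D) + D

/-- The natural affine action of `Isom(𝔼ⁿ)` on `𝔼ⁿ`: `t^λ A • x = A x + λ`. -/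
def isomAct {n : ℕ} (g : IsomE n) (x : En n) : En n := g.right x + tPart g

/-!
Cocompactness makes the translation lattice `L` of `H` relatively dense (every closed ball of some
radius `R` meets it), and discreteness makes it discrete. Hence the point group, which permutes the
finitely many short lattice vectors and these span `𝔼ⁿ`, is finite, of order `N`. Word length in
`H` is comparable to the norm of the translation part: from below because `g ↦ ‖t_g‖` is a group
seminorm, from above because (as `H` splits) `g = t^{t_g} · g.right` and every lattice vector is a
sum of about `‖t_g‖` short ones.

If `k h k⁻¹ = h'` and `A` is the rotational part of `h'`, then `t_k - A t_k = t_{h'} - k.right t_h`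
is short. Averaging over `⟨A⟩` gives an `A`-fixed lattice vector `μ` within
`N (‖t_k - A t_k‖ + R)` of `t_k`; since `t^{-μ}` commutes with `h'`, `t^{-μ} k` is again a
conjugator, now with translation part, hence word length, linear in `|h| + |h'|`.
-/

section WordLength

variable {G : Type*} [Group G] {S : Set G}

theorem exists_list_prod_eq_of_closure_eq_top (hS : Subgroup.closure S = ⊤) (g : G) :
    ∃ l : List G, (∀ x ∈ l, x ∈ S ∨ x⁻¹ ∈ S) ∧ l.prod = g := by
  have hg : g ∈ (Subgroup.closure S).toSubmonoid := hS ▸ Subgroup.mem_top g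
  rw [Subgroup.closure_toSubmonoid] at hg
  simpa using Submonoid.exists_list_of_mem_closure hg

theorem exists_list_length_eq_wordLength (hS : Subgroup.closure S = ⊤) (g : G) :
    ∃ l : List G, (∀ x ∈ l, x ∈ S ∨ x⁻¹ ∈ S) ∧ l.prod = g ∧ l.length = wordLength S g := by
  obtain ⟨l, hl, hprod⟩ := exists_list_prod_eq_of_closure_eq_top hS g
  exact Nat.sInf_mem (s := {k | ∃ l : List G, (∀ x ∈ l, x ∈ S ∨ x⁻¹ ∈ S) ∧ l.prod = g ∧
    l.length = k}) ⟨l.length, l, hl, hprod, rfl⟩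

theorem wordLength_mul_le (hS : Subgroup.closure S = ⊤) (g h : G) :
    wordLength S (g * h) ≤ wordLength S g + wordLength S h := by
  obtain ⟨l, hl, rfl, hlen⟩ := exists_list_length_eq_wordLength hS g
  obtain ⟨l', hl', rfl, hlen'⟩ := exists_list_length_eq_wordLength hS h
  rw [← hlen, ← hlen', ← List.length_append]
  refine Nat.sInf_le ⟨l ++ l', fun x hx => ?_, List.prod_append, rfl⟩
  exact (List.mem_append.1 hx).elim (hl x) (hl' x)

theorem GroupSeminorm.exists_le_mul_wordLength (p : GroupSeminorm G) (hSfin : S.Finite)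
    (hS : Subgroup.closure S = ⊤) : ∃ M : ℝ, ∀ g, p g ≤ M * wordLength S g := by
  obtain ⟨M, hM⟩ := (hSfin.image p).bddAbove
  refine ⟨M, fun g => ?_⟩
  obtain ⟨l, hl, rfl, hlen⟩ := exists_list_length_eq_wordLength hS g
  rw [← hlen]
  clear hlen
  induction l with
  | nil => simp
  | cons s l ih =>
    have hs : p s ≤ M := by
      rcases hl s List.mem_cons_self with h | h
      · exact hM ⟨s, h, rfl⟩
      · simpa using hM ⟨s⁻¹, h, rfl⟩
    rw [List.prod_cons, List.length_cons, Nat.cast_succ, mul_add_one, add_comm]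
    exact (map_mul_le_add p s l.prod).trans
      (add_le_add hs (ih fun x hx => hl x (List.mem_cons_of_mem s hx)))

theorem exists_CLF_le_of_forall_isConj {a c : ℝ}
    (h : ∀ g g' : G, IsConj g g' → ∃ k, k * g * k⁻¹ = g' ∧
      (wordLength S k : ℝ) ≤ a * (wordLength S g + wordLength S g') + c) :
    ∃ C D : ℕ, 0 < C ∧ ∀ m, CLF S m ≤ C * m + D := by
  refine ⟨⌈a⌉₊ + 1, ⌈c⌉₊, Nat.succ_pos _, fun m => csSup_le' ?_⟩
  rintro _ ⟨g, g', hc, hm, rfl⟩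
  obtain ⟨k, hk, hkl⟩ := h g g' hc
  have hm' : (wordLength S g + wordLength S g' : ℝ) ≤ m := by exact_mod_cast hm
  have hkm : (wordLength S k : ℝ) ≤ (⌈a⌉₊ + 1 : ℕ) * m + ⌈c⌉₊ := by
    push_cast
    have hnonneg : (0 : ℝ) ≤ wordLength S g + wordLength S g' := by positivity
    nlinarith [Nat.le_ceil a, Nat.le_ceil c]
  have hcl : conjLength S g g' ≤ wordLength S k := Nat.sInf_le ⟨k, hk, rfl⟩
  exact hcl.trans (by exact_mod_cast hkm)

end WordLength

section RelativelyDense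

variable {E : Type*} [NormedAddCommGroup E] {R : ℝ}

def IsRelativelyDense (R : ℝ) (L : Set E) : Prop := ∀ x : E, ∃ μ ∈ L, ‖x - μ‖ ≤ R

theorem IsRelativelyDense.nonneg {L : Set E} (hL : IsRelativelyDense R L) : 0 ≤ R := by
  obtain ⟨μ, -, hμ⟩ := hL 0
  exact (norm_nonneg _).trans hμ

theorem AddSubgroup.finite_inter_closedBall [ProperSpace E] (L : AddSubgroup E)
    [DiscreteTopology L] (r : ℝ) : ((L : Set E) ∩ Metric.closedBall 0 r).Finite := by
  rw [Set.inter_comm]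
  exact Metric.finite_isBounded_inter_isClosed DiscreteTopology.isDiscrete
    Metric.isBounded_closedBall AddSubgroup.isClosed_of_discrete

section NormedSpace

variable [NormedSpace ℝ E]

/-- Round `(1 - (R + 1) / ‖v‖) • v` to `L`. -/
theorem IsRelativelyDense.exists_norm_le_sub_one {L : Set E} (hL : IsRelativelyDense R L)
    {v : E} (hv : R + 1 ≤ ‖v‖) : ∃ μ ∈ L, ‖μ‖ ≤ ‖v‖ - 1 ∧ ‖v - μ‖ ≤ 2 * R + 1 := by
  have hR := hL.nonneg
  have hv0 : 0 < ‖v‖ := by linarith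
  set x : E := (1 - (R + 1) / ‖v‖) • v
  have hcoef : 0 ≤ 1 - (R + 1) / ‖v‖ := by
    rw [sub_nonneg, div_le_one hv0]
    exact hv
  have hx : ‖x‖ = ‖v‖ - (R + 1) := by
    rw [norm_smul, Real.norm_of_nonneg hcoef]
    field_simp
  have hvx : ‖v - x‖ = R + 1 := by
    rw [show v - x = ((R + 1) / ‖v‖) • v by simp only [x, sub_smul, one_smul, sub_sub_cancel],
      norm_smul, Real.norm_of_nonneg (by positivity)]
    field_simp
  obtain ⟨μ, hμL, hμ⟩ := hL x
  refine ⟨μ, hμL, ?_, ?_⟩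
  · linarith [norm_le_norm_add_norm_sub' μ x, norm_sub_rev x μ]
  · linarith [norm_sub_le_norm_sub_add_norm_sub v x μ]

/-- Peeling off short vectors with `exists_norm_le_sub_one` writes `v` as a sum of at most
`‖v‖ + 2` lattice vectors of norm at most `2R + 1`. -/
theorem IsRelativelyDense.le_mul_norm_add_two {L : AddSubgroup E}
    (hL : IsRelativelyDense R (L : Set E)) {f : L → ℝ} {b : ℝ}
    (hf : ∀ x y, f (x + y) ≤ f x + f y) (hb : ∀ x : L, ‖(x : E)‖ ≤ 2 * R + 1 → f x ≤ b)
    (v : L) : f v ≤ b * (‖(v : E)‖ + 2) := by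
  have hR := hL.nonneg
  have hb0 : 0 ≤ b := by
    have h0 := hf 0 0
    rw [add_zero] at h0
    linarith [hb 0 (by rw [ZeroMemClass.coe_zero, norm_zero]; linarith)]
  have key : ∀ k : ℕ, ∀ v : L, ‖(v : E)‖ ≤ k → f v ≤ b * (k + 1) := by
    intro k
    induction k with
    | zero => exact fun v hv => by simpa using hb v (by push_cast at hv; linarith)
    | succ k ih =>
      intro v hv
      by_cases hsmall : ‖(v : E)‖ ≤ 2 * R + 1
      · exact (hb v hsmall).trans (le_mul_of_one_le_right hb0 (by push_cast; linarith))
      obtain ⟨μ, hμL, hμ, hvμ⟩ := hL.exists_norm_le_sub_one (v := v) (by linarith)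
      calc f v = f ((v - ⟨μ, hμL⟩) + ⟨μ, hμL⟩) := by rw [sub_add_cancel]
        _ ≤ f (v - ⟨μ, hμL⟩) + f ⟨μ, hμL⟩ := hf _ _
        _ ≤ b + b * (k + 1) :=
          add_le_add (hb _ hvμ) (ih _ (by push_cast at hv; change ‖μ‖ ≤ k; linarith))
        _ = b * ((k + 1 : ℕ) + 1) := by push_cast; ring
  calc f v ≤ b * (⌈‖(v : E)‖⌉₊ + 1) := key _ v (Nat.le_ceil _)
    _ ≤ b * (‖(v : E)‖ + 2) :=
      mul_le_mul_of_nonneg_left (by linarith [Nat.ceil_lt_add_one (norm_nonneg (v : E))]) hb0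

theorem norm_sub_pow_apply_le (A : E ≃ₗᵢ[ℝ] E) (w : E) (i : ℕ) :
    ‖w - (A ^ i) w‖ ≤ i * ‖w - A w‖ := by
  induction i with
  | zero => simp
  | succ i ih =>
    calc ‖w - (A ^ (i + 1)) w‖ ≤ ‖w - (A ^ i) w‖ + ‖(A ^ i) w - (A ^ i) (A w)‖ :=
          norm_sub_le_norm_sub_add_norm_sub _ _ _
      _ = ‖w - (A ^ i) w‖ + ‖w - A w‖ := by rw [← map_sub, LinearIsometryEquiv.norm_map]
      _ ≤ (i + 1 : ℕ) * ‖w - A w‖ := by push_cast; linarith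

theorem apply_sum_range_pow_apply {A : E ≃ₗᵢ[ℝ] E} {N : ℕ} (hA : A ^ N = 1) (v : E) :
    A (∑ i ∈ Finset.range N, (A ^ i) v) = ∑ i ∈ Finset.range N, (A ^ i) v := by
  have hshift := Finset.sum_range_succ' (fun i => (A ^ i) v) N
  rw [Finset.sum_range_succ, hA] at hshift
  rw [map_sum]
  simpa [pow_succ'] using hshift.symm

/-- `μ` is the sum over the orbit of `⟨A⟩` of a lattice point near `w / N`. -/
theorem IsRelativelyDense.exists_apply_eq_self_norm_sub_le {L : AddSubgroup E}
    (hL : IsRelativelyDense R (L : Set E)) {A : E ≃ₗᵢ[ℝ] E} (hAL : ∀ v ∈ L, A v ∈ L) {N : ℕ}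
    (hN : 0 < N) (hA : A ^ N = 1) (w : E) :
    ∃ μ ∈ L, A μ = μ ∧ ‖w - μ‖ ≤ N * (‖w - A w‖ + R) := by
  have hpow : ∀ i : ℕ, ∀ v ∈ L, (A ^ i) v ∈ L := by
    intro i
    induction i with
    | zero => simp
    | succ i ih => exact fun v hv => by rw [pow_succ']; exact hAL _ (ih v hv)
  obtain ⟨ν, hνL, hν⟩ := hL ((N : ℝ)⁻¹ • w)
  refine ⟨∑ i ∈ Finset.range N, (A ^ i) ν, AddSubgroup.sum_mem L fun i _ => hpow i ν hνL,
    apply_sum_range_pow_apply hA ν, ?_⟩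
  have hdecomp : w - ∑ i ∈ Finset.range N, (A ^ i) ν = ∑ i ∈ Finset.range N,
      ((N : ℝ)⁻¹ • (w - (A ^ i) w) + (A ^ i) ((N : ℝ)⁻¹ • w - ν)) := by
    have hNw : ∑ _i ∈ Finset.range N, (N : ℝ)⁻¹ • w = w := by
      rw [Finset.sum_const, Finset.card_range, ← Nat.cast_smul_eq_nsmul ℝ, smul_smul,
        mul_inv_cancel₀ (by positivity), one_smul]
    simp only [map_sub, map_smul, smul_sub, sub_add_sub_cancel, Finset.sum_sub_distrib, hNw]
  rw [hdecomp]
  calc ‖∑ i ∈ Finset.range N, ((N : ℝ)⁻¹ • (w - (A ^ i) w) + (A ^ i) ((N : ℝ)⁻¹ • w - ν))‖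
      ≤ ∑ i ∈ Finset.range N, (‖(N : ℝ)⁻¹ • (w - (A ^ i) w)‖ + ‖(A ^ i) ((N : ℝ)⁻¹ • w - ν)‖) :=
        (norm_sum_le _ _).trans (Finset.sum_le_sum fun i _ => norm_add_le _ _)
    _ ≤ ∑ _i ∈ Finset.range N, (‖w - A w‖ + R) := by
      refine Finset.sum_le_sum fun i hi => add_le_add ?_ ?_
      · rw [norm_smul, norm_inv, RCLike.norm_natCast, inv_mul_le_iff₀ (by positivity)]
        exact (norm_sub_pow_apply_le A w i).trans (by
          gcongr; exact_mod_cast (Finset.mem_range.1 hi).le)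
      · rw [LinearIsometryEquiv.norm_map]
        exact hν
    _ = N * (‖w - A w‖ + R) := by rw [Finset.sum_const, Finset.card_range, nsmul_eq_mul]

end NormedSpace

theorem IsRelativelyDense.span_inter_closedBall_eq_top [InnerProductSpace ℝ E]
    [FiniteDimensional ℝ E] {L : Set E} (hL : IsRelativelyDense R L) :
    Submodule.span ℝ (L ∩ Metric.closedBall 0 (2 * R + 1)) = ⊤ := by
  set W := Submodule.span ℝ (L ∩ Metric.closedBall 0 (2 * R + 1))
  by_contra hW
  obtain ⟨y, hyW, hy⟩ :=
    Submodule.exists_mem_ne_zero_of_ne_bot (mt Submodule.orthogonal_eq_bot_iff.1 hW)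
  have hy0 : 0 < ‖y‖ := norm_pos_iff.2 hy
  set x : E := ((R + 1) / ‖y‖) • y
  have hx : ‖x‖ = R + 1 := by
    have hR := hL.nonneg
    rw [norm_smul, Real.norm_of_nonneg (by positivity), div_mul_cancel₀ _ hy0.ne']
  obtain ⟨μ, hμL, hμ⟩ := hL x
  have hμ' : ‖μ‖ ≤ 2 * R + 1 := by linarith [norm_le_norm_add_norm_sub' μ x, norm_sub_rev x μ]
  have hμW : μ ∈ W := Submodule.subset_span ⟨hμL, mem_closedBall_zero_iff.2 hμ'⟩
  -- `x - μ` has the component `R + 1` along the unit vector `y / ‖y‖`, yet length at most `R`.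
  have hinner : inner ℝ (x - μ) y = (R + 1) * ‖y‖ := by
    rw [inner_sub_left, Submodule.inner_right_of_mem_orthogonal hμW hyW, sub_zero,
      real_inner_smul_left, real_inner_self_eq_norm_sq]
    field_simp
  have := (real_inner_le_norm (x - μ) y).trans (mul_le_mul_of_nonneg_right hμ hy0.le)
  nlinarith

end RelativelyDense

theorem Subgroup.finite_of_mapsTo_of_span_eq_top {E : Type*} [NormedAddCommGroup E]
    [NormedSpace ℝ E] (G : Subgroup (E ≃ₗᵢ[ℝ] E)) {T : Set E} (hT : T.Finite)
    (hspan : Submodule.span ℝ T = ⊤) (hG : ∀ A ∈ G, Set.MapsTo A T T) : Finite G := by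
  have := hT.to_subtype
  refine Finite.of_injective (fun A : G => (hG A A.2).restrict) fun A B hAB => ?_
  have hAB' : Set.EqOn (A : E ≃ₗᵢ[ℝ] E) (B : E ≃ₗᵢ[ℝ] E) T := fun t ht =>
    congrArg Subtype.val (congrFun hAB ⟨t, ht⟩)
  exact Subtype.ext <| LinearIsometryEquiv.toLinearEquiv_injective <|
    LinearEquiv.toLinearMap_injective <| LinearMap.ext_on hspan hAB'

section Isometries

variable {n : ℕ}

def translation (v : En n) : IsomE n := SemidirectProduct.inl (Multiplicative.ofAdd v)

theorem tPart_mul (g h : IsomE n) : tPart (g * h) = tPart g + g.right (tPart h) := rfl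

theorem translation_add (v w : En n) : translation (v + w) = translation v * translation w :=
  map_mul SemidirectProduct.inl (Multiplicative.ofAdd v) (Multiplicative.ofAdd w)

theorem translation_tPart_mul_inr_right (g : IsomE n) :
    translation (tPart g) * SemidirectProduct.inr g.right = g :=
  SemidirectProduct.inl_left_mul_inr_right g

theorem inr_mul_translation_mul_inv (A : OrthGrp n) (v : En n) :
    SemidirectProduct.inr A * translation v * (SemidirectProduct.inr A)⁻¹ = translation (A v) := by
  rw [← map_inv]
  exact (SemidirectProduct.inl_aut A _).symm

theorem continuous_translation : Continuous (translation (n := n)) :=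
  continuous_induced_rng.2 (continuous_ofAdd.prodMk continuous_const)

theorem commute_translation {g : IsomE n} {v : En n} (hv : g.right v = v) :
    Commute (translation v) g := by
  refine SemidirectProduct.ext ?_ ?_
  · change Multiplicative.ofAdd (v + tPart g) = Multiplicative.ofAdd (tPart g + g.right v)
    rw [hv, add_comm]
  · simp [translation]

theorem tPart_sub_apply_tPart_of_conj {k h h' : IsomE n} (hk : k * h * k⁻¹ = h') :
    tPart k - h'.right (tPart k) = tPart h' - k.right (tPart h) := by
  rw [sub_eq_sub_iff_add_eq_add, ← tPart_mul, ← tPart_mul, ← hk, inv_mul_cancel_right]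

def translationSeminorm (n : ℕ) : GroupSeminorm (IsomE n) where
  toFun g := ‖tPart g‖
  map_one' := norm_zero
  mul_le' g h := by
    rw [tPart_mul]
    exact (norm_add_le _ _).trans_eq (by rw [LinearIsometryEquiv.norm_map])
  inv' g := by
    change ‖g.right⁻¹ (-tPart g)‖ = ‖tPart g‖
    rw [LinearIsometryEquiv.norm_map, norm_neg]

end Isometries

section Crystallographic

variable {n : ℕ}

def translationLattice (H : Subgroup (IsomE n)) : AddSubgroup (En n) where
  carrier := latticeLH H
  zero_mem' := H.one_mem
  add_mem' {v w} hv hw := by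
    change translation (v + w) ∈ H
    rw [translation_add]
    exact H.mul_mem hv hw
  neg_mem' {v} hv := by
    change SemidirectProduct.inl (Multiplicative.ofAdd v)⁻¹ ∈ H
    rw [map_inv]
    exact H.inv_mem hv

/-- `H₀ = H ∩ O(n)`, as a subgroup of `O(n)`. -/
def pointGroup (H : Subgroup (IsomE n)) : Subgroup (OrthGrp n) := H.comap SemidirectProduct.inr

variable {H : Subgroup (IsomE n)}

theorem mem_translationLattice {v : En n} : v ∈ translationLattice H ↔ translation v ∈ H :=
  Iff.rfl

theorem apply_mem_translationLattice {A : OrthGrp n} (hA : A ∈ pointGroup H) {v : En n}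
    (hv : v ∈ translationLattice H) : A v ∈ translationLattice H := by
  rw [mem_translationLattice, ← inr_mul_translation_mul_inv]
  exact H.mul_mem (H.mul_mem hA hv) (H.inv_mem hA)

theorem pow_card_pointGroup_eq_one [Finite (pointGroup H)] {A : OrthGrp n}
    (hA : A ∈ pointGroup H) : A ^ Nat.card (pointGroup H) = 1 :=
  congrArg Subtype.val (pow_card_eq_one' (x := (⟨A, hA⟩ : pointGroup H)))

theorem Splits.tPart_mem (hH : Splits H) {g : IsomE n} (hg : g ∈ H) :
    tPart g ∈ translationLattice H :=
  (hH g hg).1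

theorem Splits.isRelativelyDense (hH : Splits H)
    (hcocpt : ∃ K : Set (En n), IsCompact K ∧ ∀ x : En n, ∃ h ∈ H, ∃ y ∈ K, isomAct h y = x) :
    ∃ R, IsRelativelyDense R (translationLattice H : Set (En n)) := by
  obtain ⟨K, hK, hcover⟩ := hcocpt
  obtain ⟨r, hr⟩ := hK.isBounded.subset_closedBall 0
  refine ⟨r, fun x => ?_⟩
  obtain ⟨h, hh, y, hy, rfl⟩ := hcover x
  refine ⟨tPart h, hH.tPart_mem hh, ?_⟩
  rw [isomAct, add_sub_cancel_right, LinearIsometryEquiv.norm_map]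
  exact mem_closedBall_zero_iff.1 (hr hy)

instance [DiscreteTopology H] : DiscreteTopology (translationLattice H) :=
  DiscreteTopology.of_continuous_injective
    (f := fun v : translationLattice H => (⟨translation v, v.2⟩ : H))
    ((continuous_translation.comp continuous_subtype_val).subtype_mk fun v => v.2)
    fun _ _ hvw => Subtype.ext <| Multiplicative.ofAdd.injective <|
      SemidirectProduct.inl_injective (congrArg Subtype.val hvw)

/-- `H₀` permutes the finitely many short lattice vectors, which span `𝔼ⁿ`. -/
theorem finite_pointGroup [DiscreteTopology H] {R : ℝ}
    (hL : IsRelativelyDense R (translationLattice H : Set (En n))) : Finite (pointGroup H) :=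
  (pointGroup H).finite_of_mapsTo_of_span_eq_top
    ((translationLattice H).finite_inter_closedBall _) hL.span_inter_closedBall_eq_top
    fun _ hA _ hv => ⟨apply_mem_translationLattice hA hv.1, by
      simpa only [mem_closedBall_zero_iff, LinearIsometryEquiv.norm_map] using hv.2⟩

theorem Splits.exists_wordLength_le (hH : Splits H) [DiscreteTopology H] [Finite (pointGroup H)]
    {R : ℝ} (hL : IsRelativelyDense R (translationLattice H : Set (En n))) {S : Set H}
    (hS : Subgroup.closure S = ⊤) :
    ∃ C D : ℝ, 0 ≤ C ∧ ∀ g : H, (wordLength S g : ℝ) ≤ C * ‖tPart (g : IsomE n)‖ + D := by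
  let lift : translationLattice H → H := fun v => ⟨translation v, v.2⟩
  let T := (translationLattice H : Set (En n)) ∩ Metric.closedBall 0 (2 * R + 1)
  have : Finite T := ((translationLattice H).finite_inter_closedBall _).to_subtype
  obtain ⟨b₁, hb₁⟩ := Finite.bddAbove_range
    fun A : pointGroup H => wordLength S ⟨SemidirectProduct.inr A, A.2⟩
  obtain ⟨b₂, hb₂⟩ := Finite.bddAbove_range fun v : T => wordLength S (lift ⟨v, v.2.1⟩)
  have hlift : ∀ v, (wordLength S (lift v) : ℝ) ≤ b₂ * (‖(v : En n)‖ + 2) := by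
    refine hL.le_mul_norm_add_two (fun v w => ?_) fun v hv => ?_
    · have hvw : lift (v + w) = lift v * lift w := Subtype.ext (translation_add (v : En n) w)
      rw [hvw]
      exact_mod_cast wordLength_mul_le hS (lift v) (lift w)
    · exact_mod_cast hb₂ ⟨⟨v, v.2, mem_closedBall_zero_iff.2 hv⟩, rfl⟩
  refine ⟨b₂, 2 * b₂ + b₁, by positivity, fun g => ?_⟩
  let t := lift ⟨tPart (g : IsomE n), hH.tPart_mem g.2⟩
  let r : H := ⟨SemidirectProduct.inr (g : IsomE n).right, (hH g g.2).2⟩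
  have hg : t * r = g := Subtype.ext (translation_tPart_mul_inr_right (g : IsomE n) :)
  have hr : wordLength S r ≤ b₁ := hb₁ ⟨⟨_, (hH g g.2).2⟩, rfl⟩
  have hgt : wordLength S g ≤ wordLength S t + b₁ := by
    rw [← hg]
    exact (wordLength_mul_le hS t r).trans (Nat.add_le_add_left hr _)
  calc (wordLength S g : ℝ) ≤ wordLength S t + b₁ := by exact_mod_cast hgt
    _ ≤ b₂ * (‖tPart (g : IsomE n)‖ + 2) + b₁ := by gcongr; exact hlift _
    _ = b₂ * ‖tPart (g : IsomE n)‖ + (2 * b₂ + b₁) := by ring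

theorem Splits.exists_conj_norm_tPart_le (hH : Splits H) [Finite (pointGroup H)] {R : ℝ}
    (hL : IsRelativelyDense R (translationLattice H : Set (En n))) {h h' : H}
    (hc : IsConj h h') : ∃ k : H, k * h * k⁻¹ = h' ∧ ‖tPart (k : IsomE n)‖ ≤
      Nat.card (pointGroup H) * (‖tPart (h : IsomE n)‖ + ‖tPart (h' : IsomE n)‖ + R) := by
  obtain ⟨k, hk⟩ := isConj_iff.1 hc
  have hA : (h' : IsomE n).right ∈ pointGroup H := (hH _ h'.2).2
  obtain ⟨μ, hμL, hAμ, hμ⟩ := hL.exists_apply_eq_self_norm_sub_le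
    (fun _ => apply_mem_translationLattice hA) Nat.card_pos (pow_card_pointGroup_eq_one hA)
    (tPart (k : IsomE n))
  let t : H := ⟨translation (-μ), neg_mem hμL⟩
  have ht : Commute t h' := Subtype.ext (commute_translation (by rw [map_neg, hAμ]))
  refine ⟨t * k, ?_, ?_⟩
  · rw [show t * k * h * (t * k)⁻¹ = t * (k * h * k⁻¹) * t⁻¹ by group, hk, ht.mul_inv_cancel]
  have hkt := tPart_sub_apply_tPart_of_conj (congrArg Subtype.val hk)
  calc ‖tPart ((t * k : H) : IsomE n)‖ = ‖tPart (k : IsomE n) - μ‖ := by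
        rw [← neg_add_eq_sub]
        rfl
    _ ≤ _ := hμ
    _ ≤ _ := by
      gcongr
      rw [hkt, add_comm]
      exact (norm_sub_le _ _).trans_eq (by rw [LinearIsometryEquiv.norm_map])

end Crystallographic

/-- **The conjugator length function of every split crystallographic group grows linearly.**
A crystallographic group is a discrete cocompact subgroup of `Isom(𝔼ⁿ)`; it is split if
`H = T_H ⋊ H₀`.  For any finite generating set `S` of `H`, `CLF S m ≤ C·m + D`. -/
theorem conjugator_length_of_split_crystallographic_linear (n : ℕ)
    (H : Subgroup (IsomE n)) (hsplit : Splits H)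
    (hdisc : DiscreteTopology ↥H)
    (hcocpt : ∃ K : Set (En n), IsCompact K ∧ ∀ x : En n, ∃ h ∈ H, ∃ y ∈ K, isomAct h y = x)
    (S : Set ↥H) (hSfin : S.Finite) (hSgen : Subgroup.closure S = ⊤) :
    ∃ C D : ℕ, 0 < C ∧ ∀ m : ℕ, CLF S m ≤ C * m + D := by
  obtain ⟨R, hL⟩ := hsplit.isRelativelyDense hcocpt
  have := finite_pointGroup hL
  obtain ⟨C, D, hC, hwl⟩ := hsplit.exists_wordLength_le hL hSgen
  obtain ⟨M, hM⟩ := ((translationSeminorm n).comp H.subtype).exists_le_mul_wordLength hSfin hSgen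
  set N : ℝ := (Nat.card (pointGroup H) : ℝ)
  refine exists_CLF_le_of_forall_isConj (a := C * N * M) (c := C * N * R + D) fun h h' hc => ?_
  obtain ⟨k, hk, hkt⟩ := hsplit.exists_conj_norm_tPart_le hL hc
  refine ⟨k, hk, ?_⟩
  calc (wordLength S k : ℝ) ≤ C * ‖tPart (k : IsomE n)‖ + D := hwl k
    _ ≤ C * (N * (M * wordLength S h + M * wordLength S h' + R)) + D := by
      gcongr
      exact hkt.trans (by gcongr; exacts [hM h, hM h'])
    _ = C * N * M * (wordLength S h + wordLength S h') + (C * N * R + D) := by ring
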